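/- Let X=(V,E) be a finite simple connected graph with n ≥ 3 vertices, let T be a spanning tree of E, let F be a nonempty subset of E − T, and let ε ∈ F. Then the orbits of the coset F + 𝓑 under the edge-flipping group W_E(X) coincide with the orbits of F + 𝓑 under the subgroup W_E(X)_{T∪{ε}} generated by {ρ_{ε'} : ε' ∈ T ∪ {ε}}; moreover, if n is odd the whole coset F + 𝓑 is a single orbit, while if n is even the orbits are exactly the two sets F + 𝓑_e and F + 𝓑_o, where 𝓑_e := {G ∈ 𝓑 : sw(G) is even} and 𝓑_o := {G ∈ 𝓑 : sw(G) is odd}. -/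

import Mathlib

open scoped Classical

noncomputable section

variable {V : Type*}

/-- The indicator (over `F₂`) of whether a `Sym2` element has exactly one endpoint in `U`. -/
def edgeCutFun (U : Set V) : Sym2 V → ZMod 2 :=
  Sym2.lift ⟨fun x y => (if x ∈ U then 1 else 0) + (if y ∈ U then 1 else 0),
    fun _ _ => add_comm _ _⟩

/-- The edge cut `E(U)`, as an element of the edge space `𝓔 = (X.edgeSet → ZMod 2)`. -/
def edgeCut (X : SimpleGraph V) (U : Set V) : X.edgeSet → ZMod 2 :=
  fun e => edgeCutFun U e.1

/-- The bond space `𝓑`, the span of the vertex edge cuts. -/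
def bondSpace (X : SimpleGraph V) : Submodule (ZMod 2) (X.edgeSet → ZMod 2) :=
  Submodule.span (ZMod 2) (Set.range fun v => edgeCut X {v})

lemma edgeCut_single_mem_bondSpace (X : SimpleGraph V) (v : V) :
    edgeCut X {v} ∈ bondSpace X :=
  Submodule.subset_span ⟨v, rfl⟩

/-- generic flip: `G ↦ G + G i • C`, a linear endomorphism of `ι → ZMod 2`. -/
def flipLin {ι : Type*} (i : ι) (C : ι → ZMod 2) :
    (ι → ZMod 2) →ₗ[ZMod 2] (ι → ZMod 2) where
  toFun G := G + G i • C
  map_add' G H := by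
    funext f
    simp only [Pi.add_apply, Pi.smul_apply, smul_eq_mul]
    ring
  map_smul' c G := by
    funext f
    simp only [Pi.add_apply, Pi.smul_apply, smul_eq_mul, RingHom.id_apply]
    ring

lemma flipLin_flipLin {ι : Type*} (i : ι) (C : ι → ZMod 2) (hC : C i = 0)
    (G : ι → ZMod 2) : flipLin i C (flipLin i C G) = G := by
  funext f
  have h2 : (2 : ZMod 2) = 0 := by decide
  simp only [flipLin, LinearMap.coe_mk, AddHom.coe_mk, Pi.add_apply, Pi.smul_apply,
    smul_eq_mul, hC, mul_zero, add_zero]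
  ring_nf
  rw [h2, mul_zero, add_zero]

/-- generic flip as a unit of the endomorphism ring (element of `GL`). -/
def flipGL {ι : Type*} (i : ι) (C : ι → ZMod 2) (hC : C i = 0) :
    ((ι → ZMod 2) →ₗ[ZMod 2] (ι → ZMod 2))ˣ where
  val := flipLin i C
  inv := flipLin i C
  val_inv := LinearMap.ext fun G => flipLin_flipLin i C hC G
  inv_val := LinearMap.ext fun G => flipLin_flipLin i C hC G

lemma edgeCutFun_self (e : Sym2 V) : edgeCutFun {v | v ∈ e} e = 0 := by
  induction e using Sym2.ind with
  | _ x y =>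
    simp [edgeCutFun, Sym2.mem_iff]
    decide

/-- The move `ρ_ε` of the edge-flipping puzzle, as an element of `GL(𝓔)`. -/
def edgeFlip (X : SimpleGraph V) (ε : X.edgeSet) :
    ((X.edgeSet → ZMod 2) →ₗ[ZMod 2] (X.edgeSet → ZMod 2))ˣ :=
  flipGL ε (edgeCut X {v | v ∈ (ε : Sym2 V)}) (edgeCutFun_self ε.1)

/-- The edge-flipping group `W_E(X)`. -/
def edgeFlippingGroup (X : SimpleGraph V) :
    Subgroup ((X.edgeSet → ZMod 2) →ₗ[ZMod 2] (X.edgeSet → ZMod 2))ˣ :=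
  Subgroup.closure (Set.range (edgeFlip X))

/-- Indicator of the neighborhood `N(v)`, in the vertex space `𝒱 = (V → ZMod 2)`. -/
def nbrFun (X : SimpleGraph V) (v : V) : V → ZMod 2 :=
  fun w => if X.Adj v w then 1 else 0

/-- The move `s_v` of the vertex-flipping puzzle, as an element of `GL(𝒱)`. -/
def vertexFlip (X : SimpleGraph V) (v : V) :
    ((V → ZMod 2) →ₗ[ZMod 2] (V → ZMod 2))ˣ :=
  flipGL v (nbrFun X v) (by simp [nbrFun])

/-- The vertex-flipping group `W_V(X)`. -/
def vertexFlippingGroup (X : SimpleGraph V) :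
    Subgroup ((V → ZMod 2) →ₗ[ZMod 2] (V → ZMod 2))ˣ :=
  Subgroup.closure (Set.range (vertexFlip X))

end

/-- The orbit of a configuration `G` under a subgroup `H` of `GL(𝓔)`. -/
def orbitOf {V : Type*} (X : SimpleGraph V)
    (H : Subgroup ((X.edgeSet → ZMod 2) →ₗ[ZMod 2] (X.edgeSet → ZMod 2))ˣ)
    (G : X.edgeSet → ZMod 2) : Set (X.edgeSet → ZMod 2) :=
  {G' | ∃ g ∈ H, g.val G = G'}

/-- The configuration corresponding to a set `F` of edges (its indicator function in `𝓔`). -/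
noncomputable def chiFinset {V : Type*} (X : SimpleGraph V) (F : Finset X.edgeSet) :
    X.edgeSet → ZMod 2 :=
  fun e => if e ∈ F then 1 else 0

/-!
Every element of `F + 𝓑` is `F + E(S)` with `E(S) = Σ_{v ∈ S} E(v)` for some `S ⊆ V ∖ {u}`,
and `E(S) = E(Sᶜ)`. Flipping an edge `{x, y}` that is lit (has value `1`) replaces `S` by
`S ∆ {x, y}`, so up to complementation the parity of `#S` is invariant, and when `n` is even
complementation preserves it too. Conversely, an edge of `T` (which is not in `F`) is lit exactly
when one of its endpoints lies in `S`, and flipping it slides a token of `S` along `T`; since `T`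
is connected, the tokens can be slid to any position. The edge `ε ∈ F` is lit when both its
endpoints lie in `S`, and flipping it then removes two tokens. Hence `S` reaches every set of the
same parity, and when `n` is odd, complementation switches the parity.
-/

open scoped symmDiff
open Finset

section TokenSliding

variable {V : Type*} [DecidableEq V]

theorem Finset.card_symmDiff_add_two_mul_card_inter (A B : Finset V) :
    #(A ∆ B) + 2 * #(A ∩ B) = #A + #B := by
  have hunion : A ∆ B ∪ A ∩ B = A ∪ B := symmDiff_sup_inf A B
  have hdisj : Disjoint (A ∆ B) (A ∩ B) := disjoint_symmDiff_inf A B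
  rw [← card_union_add_card_inter A B, ← hunion, card_union_of_disjoint hdisj]
  ring

theorem Finset.even_card_symmDiff_iff (A B : Finset V) :
    Even #(A ∆ B) ↔ (Even #A ↔ Even #B) := by
  rw [← Nat.even_add, ← card_symmDiff_add_two_mul_card_inter, Nat.even_add]
  simp

theorem Finset.card_symmDiff_pair_of_mem_of_notMem {A : Finset V} {a b : V} (ha : a ∈ A)
    (hb : b ∉ A) : #(A ∆ {a, b}) = #A := by
  have hinter : A ∩ {a, b} = {a} := by
    ext x
    simp only [mem_inter, mem_insert, mem_singleton]
    constructor
    · rintro ⟨hx, rfl | rfl⟩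
      · rfl
      · exact absurd hx hb
    · rintro rfl
      exact ⟨ha, Or.inl rfl⟩
  have := card_symmDiff_add_two_mul_card_inter A {a, b}
  rw [hinter, card_singleton, card_pair (ne_of_mem_of_not_mem ha hb)] at this
  omega

theorem Finset.pair_symmDiff_pair {a b c : V} (hab : a ≠ b) (hac : a ≠ c) (hbc : b ≠ c) :
    ({a, c} : Finset V) ∆ {c, b} = {a, b} := by
  ext x
  simp only [mem_symmDiff, mem_insert, mem_singleton]
  by_cases hxa : x = a <;> by_cases hxb : x = b <;> by_cases hxc : x = c <;> simp_all

variable (Y : SimpleGraph V)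

def tokenSlide (A B : Finset V) : Prop :=
  ∃ x y, Y.Adj x y ∧ x ∈ A ∧ y ∉ A ∧ B = A ∆ {x, y}

theorem reflTransGen_tokenSlide_symmDiff_pair {a b : V} (p : Y.Walk b a) {A : Finset V}
    (ha : a ∈ A) (hb : b ∉ A) : Relation.ReflTransGen (tokenSlide Y) A (A ∆ {a, b}) := by
  induction p generalizing A with
  | nil => exact absurd ha hb
  | @cons b c a hbc q ih =>
    have hab : a ≠ b := ne_of_mem_of_not_mem ha hb
    by_cases hc : c ∈ A
    · have slide : tokenSlide Y A (A ∆ {c, b}) := ⟨c, b, hbc.symm, hc, hb, rfl⟩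
      by_cases hca : c = a
      · subst hca
        exact .single slide
      · have := ih (A := A ∆ {c, b}) (by simp [mem_symmDiff, ha, hab, Ne.symm hca])
          (by simp [mem_symmDiff, hc, hbc.ne.symm])
        rw [symmDiff_assoc, symmDiff_comm ({c, b} : Finset V),
          pair_symmDiff_pair hab (Ne.symm hca) hbc.ne] at this
        exact .head slide this
    · have hca : c ≠ a := fun h => hc (h ▸ ha)
      refine (ih ha hc).tail ⟨c, b, hbc.symm, by simp [mem_symmDiff, hc, hca],
        by simp [mem_symmDiff, hb, hab.symm, hbc.ne], ?_⟩
      rw [symmDiff_assoc, pair_symmDiff_pair hab (Ne.symm hca) hbc.ne]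

theorem reflTransGen_tokenSlide_of_card_eq (hY : Y.Connected) {A B : Finset V}
    (hAB : #A = #B) : Relation.ReflTransGen (tokenSlide Y) A B := by
  induction h : #(A ∆ B) using Nat.strong_induction_on generalizing A with
  | _ n ih =>
    by_cases hAB' : A = B
    · rw [hAB']
    obtain ⟨a, haA, haB⟩ := not_subset.mp fun hsub => hAB' (eq_of_subset_of_card_le hsub hAB.ge)
    obtain ⟨b, hbB, hbA⟩ :=
      not_subset.mp fun hsub => hAB' (eq_of_subset_of_card_le hsub hAB.le).symm
    have hpair : {a, b} ⊆ A ∆ B := by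
      simp [insert_subset_iff, mem_symmDiff, haA, haB, hbA, hbB]
    have hcard : #(A ∆ {a, b} ∆ B) < n := by
      rw [symmDiff_right_comm, symmDiff_of_ge hpair, card_sdiff_of_subset hpair, ← h,
        card_pair (ne_of_mem_of_not_mem haA hbA)]
      have : 0 < #(A ∆ B) := card_pos.mpr ⟨a, mem_symmDiff.mpr (Or.inl ⟨haA, haB⟩)⟩
      omega
    obtain ⟨p⟩ := hY.preconnected b a
    exact (reflTransGen_tokenSlide_symmDiff_pair Y p haA hbA).trans
      (ih _ hcard (by rw [card_symmDiff_pair_of_mem_of_notMem haA hbA, hAB]) rfl)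

end TokenSliding

section EdgeCut

variable {V : Type*} (X : SimpleGraph V)

theorem ite_mem_symmDiff (U W : Set V) (x : V) :
    (if x ∈ U ∆ W then (1 : ZMod 2) else 0) =
      (if x ∈ U then 1 else 0) + (if x ∈ W then 1 else 0) := by
  by_cases hU : x ∈ U <;> by_cases hW : x ∈ W <;> simp +decide [Set.mem_symmDiff, hU, hW]

theorem edgeCut_apply_of_eq (U : Set V) {e : X.edgeSet} {x y : V}
    (he : (e : Sym2 V) = s(x, y)) :
    edgeCut X U e = (if x ∈ U then 1 else 0) + (if y ∈ U then 1 else 0) := by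
  simp [edgeCut, he, edgeCutFun]

theorem edgeCut_symmDiff (U W : Set V) : edgeCut X (U ∆ W) = edgeCut X U + edgeCut X W := by
  funext e
  induction he : (e : Sym2 V) using Sym2.ind with
  | _ x y =>
    simp only [Pi.add_apply, edgeCut_apply_of_eq X _ he, ite_mem_symmDiff]
    ring

theorem edgeCut_empty : edgeCut X ∅ = 0 := by
  funext e
  induction he : (e : Sym2 V) using Sym2.ind with
  | _ x y => simp [edgeCut_apply_of_eq X _ he]

theorem edgeCut_univ : edgeCut X Set.univ = 0 := by
  funext e
  induction he : (e : Sym2 V) using Sym2.ind with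
  | _ x y =>
    rw [edgeCut_apply_of_eq X _ he]
    simp only [Set.mem_univ, if_true, Pi.zero_apply]
    decide

theorem edgeCut_compl (U : Set V) : edgeCut X Uᶜ = edgeCut X U := by
  rw [← hnot_eq_compl, ← symmDiff_top, edgeCut_symmDiff, Set.top_eq_univ, edgeCut_univ, add_zero]

theorem sum_edgeCut_singleton (S : Finset V) : ∑ v ∈ S, edgeCut X {v} = edgeCut X S := by
  induction S using Finset.induction_on with
  | empty => rw [sum_empty, coe_empty, edgeCut_empty]
  | insert a S ha ih =>
    have hunion : {a} ∪ (S : Set V) = ({a} : Set V) ∆ (S : Set V) :=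
      (Set.disjoint_singleton_left.mpr ha).symmDiff_eq_sup.symm
    rw [sum_insert ha, ih, coe_insert, Set.insert_eq, hunion, edgeCut_symmDiff]

theorem mem_bondSpace_iff {B : X.edgeSet → ZMod 2} :
    B ∈ bondSpace X ↔ ∃ S : Finset V, edgeCut X S = B := by
  constructor
  · intro hB
    induction hB using Submodule.span_induction with
    | mem _ hv =>
      obtain ⟨v, rfl⟩ := hv
      exact ⟨{v}, by rw [coe_singleton]⟩
    | zero => exact ⟨∅, by rw [coe_empty, edgeCut_empty]⟩
    | add _ _ _ _ h₁ h₂ =>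
      obtain ⟨S₁, rfl⟩ := h₁
      obtain ⟨S₂, rfl⟩ := h₂
      exact ⟨S₁ ∆ S₂, by rw [coe_symmDiff, edgeCut_symmDiff]⟩
    | smul c _ _ h =>
      obtain ⟨S, rfl⟩ := h
      obtain rfl | rfl : c = 0 ∨ c = 1 := by revert c; decide
      · exact ⟨∅, by rw [coe_empty, edgeCut_empty, zero_smul]⟩
      · exact ⟨S, (one_smul _ _).symm⟩
  · rintro ⟨S, rfl⟩
    rw [← sum_edgeCut_singleton]
    exact Submodule.sum_mem _ fun v _ => edgeCut_single_mem_bondSpace X v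

theorem exists_notMem_edgeCut_eq [Fintype V] (u : V) (S : Finset V) :
    ∃ S' : Finset V, u ∉ S' ∧ (Even (Fintype.card V) → (Even #S' ↔ Even #S)) ∧
      edgeCut X S' = edgeCut X S := by
  by_cases hu : u ∈ S
  · refine ⟨Sᶜ, by simp [hu], fun hn => ?_, by rw [coe_compl, edgeCut_compl]⟩
    rw [card_compl, Nat.even_sub (card_le_univ S)]
    simp [hn]
  · exact ⟨S, hu, fun _ => Iff.rfl, rfl⟩

end EdgeCut

section Orbit

variable {V : Type*} {X : SimpleGraph V}
  {H : Subgroup ((X.edgeSet → ZMod 2) →ₗ[ZMod 2] (X.edgeSet → ZMod 2))ˣ}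
  {G₁ G₂ G₃ : X.edgeSet → ZMod 2}

theorem mem_orbitOf_self : G₁ ∈ orbitOf X H G₁ := ⟨1, H.one_mem, rfl⟩

theorem apply_mem_orbitOf {g} (hg : g ∈ H) (G : X.edgeSet → ZMod 2) :
    g.val G ∈ orbitOf X H G := ⟨g, hg, rfl⟩

theorem mem_orbitOf_trans (h₁₂ : G₂ ∈ orbitOf X H G₁) (h₂₃ : G₃ ∈ orbitOf X H G₂) :
    G₃ ∈ orbitOf X H G₁ := by
  obtain ⟨g, hg, rfl⟩ := h₁₂
  obtain ⟨g', hg', rfl⟩ := h₂₃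
  exact ⟨g' * g, H.mul_mem hg' hg, rfl⟩

theorem mem_orbitOf_symm (h : G₂ ∈ orbitOf X H G₁) : G₁ ∈ orbitOf X H G₂ := by
  obtain ⟨g, hg, rfl⟩ := h
  refine ⟨g⁻¹, H.inv_mem hg, ?_⟩
  rw [← Module.End.mul_apply, ← Units.val_mul, inv_mul_cancel, Units.val_one,
    Module.End.one_apply]

theorem orbitOf_mono {K : Subgroup ((X.edgeSet → ZMod 2) →ₗ[ZMod 2] (X.edgeSet → ZMod 2))ˣ}
    (hHK : H ≤ K) (G : X.edgeSet → ZMod 2) : orbitOf X H G ⊆ orbitOf X K G :=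
  fun _ ⟨g, hg, hgG⟩ => ⟨g, hHK hg, hgG⟩

end Orbit

section EdgeFlip

variable {V : Type*} (X : SimpleGraph V)

theorem edgeFlip_apply (e : X.edgeSet) (G : X.edgeSet → ZMod 2) :
    (edgeFlip X e).val G = G + G e • edgeCut X {v | v ∈ (e : Sym2 V)} := rfl

theorem edgeFlip_inv (e : X.edgeSet) : (edgeFlip X e)⁻¹ = edgeFlip X e := rfl

theorem edgeCut_setOf_mem_sym2 [DecidableEq V] {e : X.edgeSet} {x y : V}
    (he : (e : Sym2 V) = s(x, y)) :
    edgeCut X {v | v ∈ (e : Sym2 V)} = edgeCut X ↑({x, y} : Finset V) := by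
  rw [he, coe_pair]
  congr 1
  ext v
  simp

theorem mapsTo_of_mem_edgeFlippingGroup {S : Set (X.edgeSet → ZMod 2)}
    (hS : ∀ e, S.MapsTo (edgeFlip X e).val S) {g} (hg : g ∈ edgeFlippingGroup X) :
    S.MapsTo g.val S := by
  induction hg using Subgroup.closure_induction'' with
  | mem _ he =>
    obtain ⟨e, rfl⟩ := he
    exact hS e
  | inv_mem _ he =>
    obtain ⟨e, rfl⟩ := he
    rw [edgeFlip_inv]
    exact hS e
  | one => exact Set.mapsTo_id S
  | mul _ _ _ _ hg hh => exact hg.comp hh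

end EdgeFlip

section CutConfig

variable {V : Type*} (X : SimpleGraph V) (F : Finset X.edgeSet)

/-- When `u ∉ S`, `#S` is the simple weight of the bond-space part `Σ_{v ∈ S} E(v)`. -/
noncomputable def cutConfig (S : Finset V) : X.edgeSet → ZMod 2 :=
  chiFinset X F + ∑ v ∈ S, edgeCut X {v}

theorem cutConfig_eq (S : Finset V) : cutConfig X F S = chiFinset X F + edgeCut X S := by
  rw [cutConfig, sum_edgeCut_singleton]

theorem cutConfig_apply [DecidableEq V] (S : Finset V) {e : X.edgeSet} {x y : V}
    (he : (e : Sym2 V) = s(x, y)) :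
    cutConfig X F S e =
      (if e ∈ F then 1 else 0) + ((if x ∈ S then 1 else 0) + (if y ∈ S then 1 else 0)) := by
  simp [cutConfig_eq, chiFinset, edgeCut_apply_of_eq X _ he]

theorem edgeFlip_cutConfig_of_apply_eq_one [DecidableEq V] (S : Finset V) {e : X.edgeSet}
    {x y : V} (he : (e : Sym2 V) = s(x, y)) (h : cutConfig X F S e = 1) :
    (edgeFlip X e).val (cutConfig X F S) = cutConfig X F (S ∆ {x, y}) := by
  rw [edgeFlip_apply, h, one_smul, edgeCut_setOf_mem_sym2 X he, cutConfig_eq, cutConfig_eq,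
    coe_symmDiff, edgeCut_symmDiff, add_assoc]

theorem exists_edgeFlip_cutConfig_eq [DecidableEq V] (S : Finset V) (e : X.edgeSet) :
    ∃ P : Finset V, Even #P ∧ (edgeFlip X e).val (cutConfig X F S) = cutConfig X F (S ∆ P) := by
  induction he : (e : Sym2 V) using Sym2.ind with
  | _ x y =>
    have hxy : x ≠ y := (X.mem_edgeSet.mp (he ▸ e.2)).ne
    obtain h | h : cutConfig X F S e = 0 ∨ cutConfig X F S e = 1 := by
      generalize cutConfig X F S e = c
      revert c
      decide
    · refine ⟨∅, ⟨0, rfl⟩, ?_⟩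
      rw [edgeFlip_apply, h, zero_smul, add_zero, ← bot_eq_empty, symmDiff_bot]
    · exact ⟨{x, y}, by rw [card_pair hxy]; exact even_two,
        edgeFlip_cutConfig_of_apply_eq_one X F S he h⟩

variable [Fintype V] (u : V)

theorem cutConfig_compl [DecidableEq V] (S : Finset V) :
    cutConfig X F Sᶜ = cutConfig X F S := by
  rw [cutConfig_eq, cutConfig_eq, coe_compl, edgeCut_compl]

theorem coset_eq_setOf_cutConfig :
    {G | ∃ B ∈ bondSpace X, G = chiFinset X F + B} = {G | ∃ S, u ∉ S ∧ G = cutConfig X F S} := by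
  ext G
  simp only [Set.mem_ofPred_eq, mem_bondSpace_iff]
  constructor
  · rintro ⟨_, ⟨S, rfl⟩, rfl⟩
    obtain ⟨S', hu, -, hS'⟩ := exists_notMem_edgeCut_eq X u S
    exact ⟨S', hu, by rw [cutConfig_eq, hS']⟩
  · rintro ⟨S, -, rfl⟩
    exact ⟨_, ⟨S, rfl⟩, cutConfig_eq X F S⟩

/-- For even `n` this is `F + 𝓑_e` if `p` holds and `F + 𝓑_o` otherwise; for odd `n` it is all
of `F + 𝓑`. -/
def cosetParityClass (p : Prop) : Set (X.edgeSet → ZMod 2) :=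
  {G | ∃ S : Finset V, u ∉ S ∧ (Even (Fintype.card V) → (Even #S ↔ p)) ∧ G = cutConfig X F S}

theorem cosetParityClass_of_even (hn : Even (Fintype.card V)) {p : Prop} (hp : p) :
    cosetParityClass X F u p = {G | ∃ S : Finset V, u ∉ S ∧ Even #S ∧ G = cutConfig X F S} := by
  simp [cosetParityClass, hn, hp]

theorem cosetParityClass_of_even_of_not (hn : Even (Fintype.card V)) {p : Prop} (hp : ¬p) :
    cosetParityClass X F u p = {G | ∃ S : Finset V, u ∉ S ∧ Odd #S ∧ G = cutConfig X F S} := by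
  simp [cosetParityClass, hn, hp]

theorem cosetParityClass_of_odd (hn : Odd (Fintype.card V)) (p : Prop) :
    cosetParityClass X F u p = {G | ∃ S : Finset V, u ∉ S ∧ G = cutConfig X F S} := by
  simp [cosetParityClass, Nat.not_even_iff_odd.mpr hn]

theorem mapsTo_edgeFlip_cosetParityClass (p : Prop) (e : X.edgeSet) :
    (cosetParityClass X F u p).MapsTo (edgeFlip X e).val (cosetParityClass X F u p) := by
  rintro _ ⟨S, -, hSp, rfl⟩
  obtain ⟨P, hP, hflip⟩ := exists_edgeFlip_cutConfig_eq X F S e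
  obtain ⟨S', hu, hS'S, hcut⟩ := exists_notMem_edgeCut_eq X u (S ∆ P)
  refine ⟨S', hu, fun hn => ?_, by rw [hflip, cutConfig_eq, cutConfig_eq, hcut]⟩
  rw [hS'S hn, ← hSp hn, even_card_symmDiff_iff]
  simp [hP]

theorem orbitOf_edgeFlippingGroup_subset_cosetParityClass {p : Prop} {G : X.edgeSet → ZMod 2}
    (hG : G ∈ cosetParityClass X F u p) :
    orbitOf X (edgeFlippingGroup X) G ⊆ cosetParityClass X F u p := by
  rintro _ ⟨g, hg, rfl⟩
  exact mapsTo_of_mem_edgeFlippingGroup X (mapsTo_edgeFlip_cosetParityClass X F u p) hg hG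

end CutConfig

section Reach

variable {V : Type*} {X : SimpleGraph V} {F : Finset X.edgeSet} {T : Set (Sym2 V)}
  {ε : X.edgeSet} {H : Subgroup ((X.edgeSet → ZMod 2) →ₗ[ZMod 2] (X.edgeSet → ZMod 2))ˣ}

theorem cutConfig_mem_orbitOf_of_tokenSlide [DecidableEq V] (hTX : T ⊆ X.edgeSet)
    (hFT : ∀ e ∈ F, (e : Sym2 V) ∉ T)
    (hH : ∀ e : X.edgeSet, (e : Sym2 V) ∈ T → edgeFlip X e ∈ H) {S S' : Finset V}
    (h : tokenSlide (SimpleGraph.fromEdgeSet T) S S') :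
    cutConfig X F S' ∈ orbitOf X H (cutConfig X F S) := by
  obtain ⟨x, y, hxy, hx, hy, rfl⟩ := h
  rw [SimpleGraph.fromEdgeSet_adj] at hxy
  let e : X.edgeSet := ⟨s(x, y), hTX hxy.1⟩
  have heF : e ∉ F := fun heF => hFT e heF hxy.1
  have hlit : cutConfig X F S e = 1 := by simp [cutConfig_apply X F S (e := e) rfl, heF, hx, hy]
  rw [← edgeFlip_cutConfig_of_apply_eq_one X F S rfl hlit]
  exact apply_mem_orbitOf (hH e hxy.1) _

theorem cutConfig_mem_orbitOf_of_card_eq (hTX : T ⊆ X.edgeSet)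
    (hT : (SimpleGraph.fromEdgeSet T).Connected) (hFT : ∀ e ∈ F, (e : Sym2 V) ∉ T)
    (hH : ∀ e : X.edgeSet, (e : Sym2 V) ∈ T → edgeFlip X e ∈ H) {S S' : Finset V}
    (h : #S = #S') : cutConfig X F S' ∈ orbitOf X H (cutConfig X F S) := by
  have hslides := reflTransGen_tokenSlide_of_card_eq _ hT h
  clear h
  induction hslides with
  | refl => exact mem_orbitOf_self
  | tail _ hslide ih =>
    exact mem_orbitOf_trans ih (cutConfig_mem_orbitOf_of_tokenSlide hTX hFT hH hslide)

theorem cutConfig_sdiff_mem_orbitOf [DecidableEq V] (hεF : ε ∈ F) (hε : edgeFlip X ε ∈ H)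
    {x y : V} (he : (ε : Sym2 V) = s(x, y)) {S : Finset V} (hxy : {x, y} ⊆ S) :
    cutConfig X F (S \ {x, y}) ∈ orbitOf X H (cutConfig X F S) := by
  have hlit : cutConfig X F S ε = 1 := by
    rw [cutConfig_apply X F S he]
    simp only [hεF, hxy (mem_insert_self x {y}), hxy (mem_insert_of_mem (mem_singleton_self y)),
      if_true]
    decide
  rw [← symmDiff_of_ge hxy, ← edgeFlip_cutConfig_of_apply_eq_one X F S he hlit]
  exact apply_mem_orbitOf hε _

variable [Fintype V]

theorem cutConfig_mem_orbitOf_of_card_eq_add (hTX : T ⊆ X.edgeSet)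
    (hT : (SimpleGraph.fromEdgeSet T).Connected) (hFT : ∀ e ∈ F, (e : Sym2 V) ∉ T)
    (hεF : ε ∈ F) (hH : ∀ e : X.edgeSet, (e : Sym2 V) ∈ T ∨ e = ε → edgeFlip X e ∈ H)
    (m : ℕ) {S S' : Finset V} (h : #S = #S' + 2 * m) :
    cutConfig X F S' ∈ orbitOf X H (cutConfig X F S) := by
  induction m generalizing S with
  | zero => exact cutConfig_mem_orbitOf_of_card_eq hTX hT hFT (fun e he => hH e (.inl he)) h
  | succ m ih =>
    induction he : (ε : Sym2 V) using Sym2.ind with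
    | _ x y =>
      have hxy : x ≠ y := (X.mem_edgeSet.mp (he ▸ ε.2)).ne
      obtain ⟨S₁, hxyS₁, hS₁⟩ := exists_superset_card_eq (s := {x, y}) (n := #S)
        (by rw [card_pair hxy]; omega) (card_le_univ S)
      refine mem_orbitOf_trans
        (cutConfig_mem_orbitOf_of_card_eq hTX hT hFT (fun e he => hH e (.inl he)) hS₁.symm)
        (mem_orbitOf_trans (cutConfig_sdiff_mem_orbitOf hεF (hH ε (.inr rfl)) he hxyS₁) (ih ?_))
      rw [card_sdiff_of_subset hxyS₁, card_pair hxy]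
      omega

theorem cutConfig_mem_orbitOf (hTX : T ⊆ X.edgeSet)
    (hT : (SimpleGraph.fromEdgeSet T).Connected) (hFT : ∀ e ∈ F, (e : Sym2 V) ∉ T)
    (hεF : ε ∈ F) (hH : ∀ e : X.edgeSet, (e : Sym2 V) ∈ T ∨ e = ε → edgeFlip X e ∈ H)
    {S S' : Finset V} (h : Even (Fintype.card V) → (Even #S' ↔ Even #S)) :
    cutConfig X F S' ∈ orbitOf X H (cutConfig X F S) := by
  have of_even_iff : ∀ {S'}, (Even #S' ↔ Even #S) →
      cutConfig X F S' ∈ orbitOf X H (cutConfig X F S) := by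
    intro S' hpar
    rcases le_total #S' #S with hle | hle
    · obtain ⟨m, hm⟩ := (Nat.even_sub hle).mpr hpar.symm
      exact cutConfig_mem_orbitOf_of_card_eq_add hTX hT hFT hεF hH m (by omega)
    · obtain ⟨m, hm⟩ := (Nat.even_sub hle).mpr hpar
      exact mem_orbitOf_symm (cutConfig_mem_orbitOf_of_card_eq_add hTX hT hFT hεF hH m (by omega))
  by_cases hS'S : Even #S' ↔ Even #S
  · exact of_even_iff hS'S
  · have hn : ¬Even (Fintype.card V) := fun hn => hS'S (h hn)
    rw [← cutConfig_compl X F S']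
    refine of_even_iff ?_
    rw [card_compl, Nat.even_sub (card_le_univ S')]
    tauto

theorem orbitOf_cutConfig (hTX : T ⊆ X.edgeSet) (hT : (SimpleGraph.fromEdgeSet T).Connected)
    (hFT : ∀ e ∈ F, (e : Sym2 V) ∉ T) (hεF : ε ∈ F)
    (hH : ∀ e : X.edgeSet, (e : Sym2 V) ∈ T ∨ e = ε → edgeFlip X e ∈ H)
    (hHW : H ≤ edgeFlippingGroup X) {u : V} {S : Finset V} (hu : u ∉ S) :
    orbitOf X H (cutConfig X F S) = cosetParityClass X F u (Even #S) := by
  have hS : cutConfig X F S ∈ cosetParityClass X F u (Even #S) := ⟨S, hu, fun _ => Iff.rfl, rfl⟩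
  refine ((orbitOf_mono hHW _).trans
    (orbitOf_edgeFlippingGroup_subset_cosetParityClass X F u hS)).antisymm ?_
  rintro _ ⟨S', -, hS', rfl⟩
  exact cutConfig_mem_orbitOf hTX hT hFT hεF hH hS'

end Reach

theorem orbits_of_coset_general {V : Type*} [Fintype V] (X : SimpleGraph V)
    (T : Set (Sym2 V)) (hTsub : T ⊆ X.edgeSet)
    (hTconn : (SimpleGraph.fromEdgeSet T).Connected) (u : V)
    (F : Finset X.edgeSet)
    (hFT : ∀ e ∈ F, (e : Sym2 V) ∉ T) (ε : X.edgeSet) (hε : ε ∈ F) :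
    (∀ G ∈ {G' | ∃ B ∈ bondSpace X, G' = chiFinset X F + B},
      orbitOf X (edgeFlippingGroup X) G
        = orbitOf X (Subgroup.closure
            {g | ∃ ε' : X.edgeSet, ((ε' : Sym2 V) ∈ T ∨ ε' = ε) ∧ g = edgeFlip X ε'}) G) ∧
    (Odd (Fintype.card V) →
      ∀ G ∈ {G' | ∃ B ∈ bondSpace X, G' = chiFinset X F + B},
        orbitOf X (edgeFlippingGroup X) G
          = {G' | ∃ B ∈ bondSpace X, G' = chiFinset X F + B}) ∧
    (Even (Fintype.card V) →
      (∀ G ∈ {G' | ∃ B ∈ bondSpace X, G' = chiFinset X F + B},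
        orbitOf X (edgeFlippingGroup X) G
            = {G' | ∃ S : Finset V, u ∉ S ∧ Even S.card ∧
                G' = chiFinset X F + ∑ v ∈ S, edgeCut X {v}} ∨
        orbitOf X (edgeFlippingGroup X) G
            = {G' | ∃ S : Finset V, u ∉ S ∧ Odd S.card ∧
                G' = chiFinset X F + ∑ v ∈ S, edgeCut X {v}}) ∧
      (∃ G ∈ {G' | ∃ B ∈ bondSpace X, G' = chiFinset X F + B},
        orbitOf X (edgeFlippingGroup X) G
            = {G' | ∃ S : Finset V, u ∉ S ∧ Even S.card ∧
                G' = chiFinset X F + ∑ v ∈ S, edgeCut X {v}}) ∧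
      (∃ G ∈ {G' | ∃ B ∈ bondSpace X, G' = chiFinset X F + B},
        orbitOf X (edgeFlippingGroup X) G
            = {G' | ∃ S : Finset V, u ∉ S ∧ Odd S.card ∧
                G' = chiFinset X F + ∑ v ∈ S, edgeCut X {v}})) := by
  have hW : ∀ e : X.edgeSet, (e : Sym2 V) ∈ T ∨ e = ε → edgeFlip X e ∈ edgeFlippingGroup X :=
    fun e _ => Subgroup.subset_closure ⟨e, rfl⟩
  set H := Subgroup.closure
    {g | ∃ ε' : X.edgeSet, ((ε' : Sym2 V) ∈ T ∨ ε' = ε) ∧ g = edgeFlip X ε'}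
  have hH : ∀ e : X.edgeSet, (e : Sym2 V) ∈ T ∨ e = ε → edgeFlip X e ∈ H :=
    fun e he => Subgroup.subset_closure ⟨e, he, rfl⟩
  have hHW : H ≤ edgeFlippingGroup X :=
    (Subgroup.closure_le _).mpr fun _ ⟨e, he, hg⟩ => hg ▸ hW e he
  have orbitOf_W {S} (hu : u ∉ S) := orbitOf_cutConfig hTsub hTconn hFT hε hW le_rfl (F := F) hu
  have orbitOf_H {S} (hu : u ∉ S) := orbitOf_cutConfig hTsub hTconn hFT hε hH hHW (F := F) hu
  rw [coset_eq_setOf_cutConfig X F u]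
  refine ⟨?_, fun hn => ?_, fun hn => ⟨?_, ⟨_, ⟨∅, notMem_empty u, rfl⟩, ?_⟩,
    ⟨_, ⟨univ.erase u, notMem_erase u univ, rfl⟩, ?_⟩⟩⟩
  · rintro _ ⟨S, hu, rfl⟩
    rw [orbitOf_W hu, orbitOf_H hu]
  · rintro _ ⟨S, hu, rfl⟩
    rw [orbitOf_W hu, cosetParityClass_of_odd X F u hn]
  · rintro _ ⟨S, hu, rfl⟩
    rw [orbitOf_W hu]
    by_cases hS : Even #S
    · exact .inl (cosetParityClass_of_even X F u hn hS)
    · exact .inr (cosetParityClass_of_even_of_not X F u hn hS)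
  · rw [orbitOf_W (notMem_empty u), cosetParityClass_of_even X F u hn (by simp)]
    rfl
  · have hodd : ¬Even #(univ.erase u) := by
      rw [card_erase_of_mem (mem_univ u), card_univ, Nat.even_sub (Fintype.card_pos_iff.mpr ⟨u⟩)]
      simp [hn]
    rw [orbitOf_W (notMem_erase u univ), cosetParityClass_of_even_of_not X F u hn hodd]
    rfl

/-- Let `X` be a finite simple connected graph with `n ≥ 3` vertices,
`T` a spanning tree, `F` a nonempty subset of `E - T` and `ε ∈ F`. Then the orbits of the
coset `F + 𝓑` under `W_E(X)` coincide with the orbits under `W_E(X)_{T ∪ {ε}}`; moreover,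
if `n` is odd the whole coset `F + 𝓑` is a single orbit, while if `n` is even the orbits
are exactly the two sets `F + 𝓑_e` and `F + 𝓑_o`, where `𝓑_e` (resp. `𝓑_o`) consists of
the elements of the bond space of even (resp. odd) simple weight with respect to the fixed
vertex `u`. -/
theorem orbits_of_coset {V : Type*} [Fintype V] (X : SimpleGraph V)
    (hconn : X.Connected) (hn : 3 ≤ Fintype.card V)
    (T : Set (Sym2 V)) (hTsub : T ⊆ X.edgeSet)
    (hTcard : T.ncard = Fintype.card V - 1)
    (hTconn : (SimpleGraph.fromEdgeSet T).Connected) (u : V)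
    (F : Finset X.edgeSet) (hFne : F.Nonempty)
    (hFT : ∀ e ∈ F, (e : Sym2 V) ∉ T) (ε : X.edgeSet) (hε : ε ∈ F) :
    (∀ G ∈ {G' | ∃ B ∈ bondSpace X, G' = chiFinset X F + B},
      orbitOf X (edgeFlippingGroup X) G
        = orbitOf X (Subgroup.closure
            {g | ∃ ε' : X.edgeSet, ((ε' : Sym2 V) ∈ T ∨ ε' = ε) ∧ g = edgeFlip X ε'}) G) ∧
    (Odd (Fintype.card V) →
      ∀ G ∈ {G' | ∃ B ∈ bondSpace X, G' = chiFinset X F + B},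
        orbitOf X (edgeFlippingGroup X) G
          = {G' | ∃ B ∈ bondSpace X, G' = chiFinset X F + B}) ∧
    (Even (Fintype.card V) →
      (∀ G ∈ {G' | ∃ B ∈ bondSpace X, G' = chiFinset X F + B},
        orbitOf X (edgeFlippingGroup X) G
            = {G' | ∃ S : Finset V, u ∉ S ∧ Even S.card ∧
                G' = chiFinset X F + ∑ v ∈ S, edgeCut X {v}} ∨
        orbitOf X (edgeFlippingGroup X) G
            = {G' | ∃ S : Finset V, u ∉ S ∧ Odd S.card ∧
                G' = chiFinset X F + ∑ v ∈ S, edgeCut X {v}}) ∧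
      (∃ G ∈ {G' | ∃ B ∈ bondSpace X, G' = chiFinset X F + B},
        orbitOf X (edgeFlippingGroup X) G
            = {G' | ∃ S : Finset V, u ∉ S ∧ Even S.card ∧
                G' = chiFinset X F + ∑ v ∈ S, edgeCut X {v}}) ∧
      (∃ G ∈ {G' | ∃ B ∈ bondSpace X, G' = chiFinset X F + B},
        orbitOf X (edgeFlippingGroup X) G
            = {G' | ∃ S : Finset V, u ∉ S ∧ Odd S.card ∧
                G' = chiFinset X F + ∑ v ∈ S, edgeCut X {v}})) :=
  orbits_of_coset_general X T hTsub hTconn u F hFT ε hε
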